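/- arXiv:2404.10562 — 10 statements merged into one kernel-verified Lean document; each statement's English description precedes it below -/
import Mathlib

section
/- Let E be a real normed vector space and N a smooth (1,1) tensor field on E such that [N,N]_FN(X,Y) = 0 for all vector fields X, Y. Then [N^k, N^l]_FN(X,Y) = 0 for all positive integers k, l and all vector fields X, Y, where N^k denotes the pointwise k-th power x ↦ N(x)^k. -/
variable {E : Type*} [NormedAddCommGroup E] [NormedSpace ℝ E]

/-- Lie bracket of vector fields on `E`: `[X,Y](x) = DY(x)(X(x)) − DX(x)(Y(x))`. -/
noncomputable def lie (X Y : E → E) : E → E :=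
  fun x => fderiv ℝ Y x (X x) - fderiv ℝ X x (Y x)

/-- Pointwise action of a (1,1) tensor field on a vector field. -/
def app (N : E → E →L[ℝ] E) (X : E → E) : E → E := fun x => N x (X x)

/-- Pointwise `k`-th power of a (1,1) tensor field. -/
def pw (N : E → E →L[ℝ] E) (k : ℕ) : E → E →L[ℝ] E := fun x => (N x) ^ k

/-- Frölicher–Nijenhuis bracket of two (1,1) tensor fields, evaluated on vector fields. -/
noncomputable def fnBracket (N₁ N₂ : E → E →L[ℝ] E) (X Y : E → E) : E → E :=
  fun x =>
    N₁ x (N₂ x (lie X Y x)) + N₂ x (N₁ x (lie X Y x))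
      + lie (app N₁ X) (app N₂ Y) x + lie (app N₂ X) (app N₁ Y) x
      - N₁ x (lie (app N₂ X) Y x + lie X (app N₂ Y) x)
      - N₂ x (lie (app N₁ X) Y x + lie X (app N₁ Y) x)

/-- Nijenhuis torsion of a (1,1) tensor field, evaluated on vector fields. -/
noncomputable def tor (N : E → E →L[ℝ] E) (X Y : E → E) : E → E :=
  fun x =>
    lie (app N X) (app N Y) x
      + N x (N x (lie X Y x) - lie (app N X) Y x - lie X (app N Y) x)

/-- Haantjes tensor of a (1,1) tensor field, evaluated on vector fields. -/
noncomputable def haan (M : E → E →L[ℝ] E) (X Y : E → E) : E → E :=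
  fun x =>
    M x (M x (tor M X Y x)) + tor M (app M X) (app M Y) x
      - M x (tor M (app M X) Y x + tor M X (app M Y) x)

/-- The bracket `[A,B]_X = [AX,BX] − A[X,BX] + B[X,AX]` of two (1,1) tensor fields
with respect to a vector field `X`. -/
noncomputable def brX (A B : E → E →L[ℝ] E) (X : E → E) : E → E :=
  fun x =>
    lie (app A X) (app B X) x - A x (lie X (app B X) x) + B x (lie X (app A X) x)

/-- A 1-form is closed iff its Fréchet derivative is symmetric. -/
def IsClosedOneForm (ρ : E → E →L[ℝ] ℝ) : Prop :=
  ∀ x u v, fderiv ℝ ρ x u v = fderiv ℝ ρ x v u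

/-!
The Frölicher–Nijenhuis bracket is tensorial: at a point `x` it only depends on `X x`, `Y x`
and on the values and first derivatives of the two tensor fields at `x`. Evaluating the
hypothesis on constant vector fields therefore yields a pointwise algebraic identity between
`N x` and `DN(x)`. Since `D(N^(m+1)) = N · D(N^m) + DN · N^m`, an induction on `l` and then on
`k` propagates this identity to `N^k`, `N^l`, and tensoriality turns it back into the vanishing
of `[N^k, N^l]_FN`.
-/

section LocalForm

variable (α β : E →L[ℝ] E →L[ℝ] E) (A B : E →L[ℝ] E) (a b : E)

noncomputable def fnHalfForm : E :=
  β (A a) b - α (B b) a + B (α b a) - A (β a b)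

/-- The value of `[A, B]_FN` on vectors `a, b` at a point where the tensor fields take the
values `A, B` and have derivatives `α, β`. -/
noncomputable def fnForm : E :=
  fnHalfForm α β A B a b + fnHalfForm β α B A a b

lemma fnForm_self : fnForm α α A A a b = (2 : ℝ) • fnHalfForm α α A A a b :=
  (two_smul ℝ _).symm

end LocalForm

section Tensoriality

variable {A B : E → E →L[ℝ] E} {X Y : E → E} {x : E}

lemma fderiv_app (hA : DifferentiableAt ℝ A x) (hX : DifferentiableAt ℝ X x) (w : E) :
    fderiv ℝ (app A X) x w = fderiv ℝ A x w (X x) + A x (fderiv ℝ X x w) := by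
  rw [show app A X = fun y => A y (X y) from rfl, fderiv_clm_apply hA hX]
  simp only [add_apply, ContinuousLinearMap.comp_apply, ContinuousLinearMap.flip_apply]
  abel

theorem fnBracket_eq_fnForm (hA : DifferentiableAt ℝ A x) (hB : DifferentiableAt ℝ B x)
    (hX : DifferentiableAt ℝ X x) (hY : DifferentiableAt ℝ Y x) :
    fnBracket A B X Y x = fnForm (fderiv ℝ A x) (fderiv ℝ B x) (A x) (B x) (X x) (Y x) := by
  simp only [fnBracket, lie, fderiv_app hA hX, fderiv_app hA hY, fderiv_app hB hX,
    fderiv_app hB hY, app, fnForm, fnHalfForm, map_add, map_sub]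
  abel

end Tensoriality

section Powers

variable (δ : E →L[ℝ] E →L[ℝ] E) (M : E →L[ℝ] E)

/-- `derivPow δ M m` is the derivative of `y ↦ N y ^ m` at a point where `N = M`, `DN = δ`. -/
noncomputable def derivPow : ℕ → E →L[ℝ] E →L[ℝ] E
  | 0 => 0
  | m + 1 => M • derivPow m + MulOpposite.op (M ^ m) • δ

@[simp]
lemma derivPow_succ_apply (m : ℕ) (u v : E) :
    derivPow δ M (m + 1) u v = M (derivPow δ M m u v) + δ u ((M ^ m) v) := by
  simp [derivPow]

variable {δ M}

lemma hasFDerivAt_pw {N : E → E →L[ℝ] E} {x : E} (hN : HasFDerivAt N δ x) (m : ℕ) :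
    HasFDerivAt (pw N m) (derivPow δ (N x) m) x := by
  induction m with
  | zero => exact hasFDerivAt_const (1 : E →L[ℝ] E) x
  | succ m ih =>
    rw [show pw N (m + 1) = N * pw N m from funext fun y => pow_succ' (N y) m]
    exact hN.mul' ih

lemma pow_apply_comm (m : ℕ) (v : E) : (M ^ m) (M v) = M ((M ^ m) v) := by
  rw [← mul_apply_eq_comp, ← pow_succ, pow_succ', mul_apply_eq_comp]

lemma fnHalfForm_derivPow_one_left (hδ : ∀ a b, fnHalfForm δ δ M M a b = 0) (l : ℕ) (a b : E) :
    fnHalfForm δ (derivPow δ M l) M (M ^ l) a b = 0 := by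
  induction l with
  | zero => simp [fnHalfForm, derivPow]
  | succ l ih =>
    have h := congrArg M ih
    simp only [fnHalfForm, map_sub, map_add, map_zero] at hδ h ⊢
    simp only [derivPow_succ_apply, pow_succ', mul_apply_eq_comp, map_add]
    linear_combination (norm := abel1) hδ a ((M ^ l) b) + h

lemma fnHalfForm_derivPow (hδ : ∀ a b, fnHalfForm δ δ M M a b = 0) (k l : ℕ) (a b : E) :
    fnHalfForm (derivPow δ M k) (derivPow δ M l) (M ^ k) (M ^ l) a b = 0 := by
  induction k with
  | zero => simp [fnHalfForm, derivPow]
  | succ k ih =>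
    have h₁ := fnHalfForm_derivPow_one_left hδ l ((M ^ k) a) b
    have h₂ := congrArg M ih
    simp only [fnHalfForm, map_sub, map_add, map_zero] at h₁ h₂ ⊢
    simp only [derivPow_succ_apply, pow_succ', mul_apply_eq_comp, map_add, pow_apply_comm]
    linear_combination (norm := abel1) h₁ + h₂

lemma fnForm_derivPow (hδ : ∀ a b, fnHalfForm δ δ M M a b = 0) (k l : ℕ) (a b : E) :
    fnForm (derivPow δ M k) (derivPow δ M l) (M ^ k) (M ^ l) a b = 0 := by
  rw [fnForm, fnHalfForm_derivPow hδ, fnHalfForm_derivPow hδ, add_zero]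

end Powers

theorem stmt1_general (N : E → E →L[ℝ] E) (hN : ContDiff ℝ (⊤ : ℕ∞) N)
    (h : ∀ X Y : E → E, ContDiff ℝ (⊤ : ℕ∞) X → ContDiff ℝ (⊤ : ℕ∞) Y →
      ∀ x, fnBracket N N X Y x = 0)
    (k l : ℕ)
    (X Y : E → E) (hX : ContDiff ℝ (⊤ : ℕ∞) X) (hY : ContDiff ℝ (⊤ : ℕ∞) Y) (x : E) :
    fnBracket (pw N k) (pw N l) X Y x = 0 := by
  have hNx : HasFDerivAt N (fderiv ℝ N x) x :=
    (hN.differentiable (by simp) x).hasFDerivAt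
  have hPow (m : ℕ) := hasFDerivAt_pw hNx m
  have hNijenhuis (a b : E) : fnHalfForm (fderiv ℝ N x) (fderiv ℝ N x) (N x) (N x) a b = 0 := by
    have hab := h (fun _ => a) (fun _ => b) contDiff_const contDiff_const x
    rw [fnBracket_eq_fnForm hNx.differentiableAt hNx.differentiableAt
      (differentiableAt_const a) (differentiableAt_const b), fnForm_self] at hab
    exact (smul_eq_zero.mp hab).resolve_left two_ne_zero
  rw [fnBracket_eq_fnForm (hPow k).differentiableAt (hPow l).differentiableAt
    (hX.differentiable (by simp) x) (hY.differentiable (by simp) x),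
    (hPow k).fderiv, (hPow l).fderiv]
  exact fnForm_derivPow hNijenhuis k l (X x) (Y x)

theorem stmt1 (N : E → E →L[ℝ] E) (hN : ContDiff ℝ (⊤ : ℕ∞) N)
    (h : ∀ X Y : E → E, ContDiff ℝ (⊤ : ℕ∞) X → ContDiff ℝ (⊤ : ℕ∞) Y →
      ∀ x, fnBracket N N X Y x = 0)
    (k l : ℕ) (hk : 0 < k) (hl : 0 < l)
    (X Y : E → E) (hX : ContDiff ℝ (⊤ : ℕ∞) X) (hY : ContDiff ℝ (⊤ : ℕ∞) Y) (x : E) :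
    fnBracket (pw N k) (pw N l) X Y x = 0 :=
  stmt1_general N hN h k l X Y hX hY x
end

section
/- Let E be a real normed vector space and N a smooth (1,1) tensor field on E whose Nijenhuis torsion vanishes, i.e. T(N)(X,Y) = 0 for all vector fields X, Y. Then for every positive integer k the Nijenhuis torsion of the pointwise power N^k also vanishes: T(N^k)(X,Y) = 0 for all vector fields X, Y. -/
variable {E : Type*} [NormedAddCommGroup E] [NormedSpace ℝ E]

/-!
At a point `x`, the torsion of `M` on `X, Y` depends only on `A = M x`, `B = DM(x)` and the values
`u = X x`, `v = Y x`: it equals `C(u, v) - C(v, u)` with `C(a, b) = B(Aa)b - A(B a b)`. Hence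
`T(N) = 0` means that `C` is symmetric. For `M = N ^ k` the derivative is `Σ A^(k-1-i) B A^i`, and
telescoping `B(A^k a) - A^k B(a)` turns the defect of `N ^ k` into the double sum
`Σ_{i,j} A^(k-1-i) A^(k-1-j) C(A^j u, A^i v)`, which is symmetric because powers of `A` commute.
-/

open Finset
open scoped RightActions

section Defect

variable {𝕜 F : Type*} [NontriviallyNormedField 𝕜] [NormedAddCommGroup F] [NormedSpace 𝕜 F]

def nijenhuisDefect (A : F →L[𝕜] F) (B : F →L[𝕜] F →L[𝕜] F) (a b : F) : F :=
  B (A a) b - A (B a b)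

theorem apply_pow_sub_pow_apply (A : F →L[𝕜] F) (B : F →L[𝕜] F →L[𝕜] F) (k : ℕ) (u w : F) :
    B ((A ^ k) u) w - (A ^ k) (B u w)
      = ∑ j ∈ range k, (A ^ (k - 1 - j)) (nijenhuisDefect A B ((A ^ j) u) w) := by
  induction k generalizing u with
  | zero => simp
  | succ k ih =>
    have hsplit : B ((A ^ (k + 1)) u) w - (A ^ (k + 1)) (B u w)
        = (B ((A ^ k) (A u)) w - (A ^ k) (B (A u) w)) + (A ^ k) (nijenhuisDefect A B u w) := by
      simp only [nijenhuisDefect, pow_succ, mul_apply_eq_comp, map_sub]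
      abel
    rw [hsplit, ih, sum_range_succ']
    congr 1
    refine sum_congr rfl fun j _ => ?_
    rw [← mul_apply_eq_comp (A ^ j), ← pow_succ, show k + 1 - 1 - (j + 1) = k - 1 - j by omega]

theorem nijenhuisDefect_pow_apply (A : F →L[𝕜] F) (B : F →L[𝕜] F →L[𝕜] F) (k : ℕ) (u v : F) :
    nijenhuisDefect (A ^ k) (∑ i ∈ range k, A ^ (k.pred - i) •> B <• A ^ i) u v
      = ∑ i ∈ range k, ∑ j ∈ range k,
          (A ^ (k - 1 - i) * A ^ (k - 1 - j)) (nijenhuisDefect A B ((A ^ j) u) ((A ^ i) v)) := by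
  have hcomm : ∀ i, A ^ k * A ^ (k - 1 - i) = A ^ (k - 1 - i) * A ^ k := fun i => pow_mul_comm _ _ _
  rw [nijenhuisDefect]
  simp only [_root_.sum_apply, smul_apply, smul_eq_mul, op_smul_eq_mul, mul_apply_eq_comp, map_sum,
    Nat.pred_eq_sub_one]
  rw [← sum_sub_distrib]
  refine sum_congr rfl fun i _ => ?_
  rw [← mul_apply_eq_comp (A ^ k), hcomm, mul_apply_eq_comp, ← map_sub, apply_pow_sub_pow_apply,
    map_sum]

theorem nijenhuisDefect_pow_comm {A : F →L[𝕜] F} {B : F →L[𝕜] F →L[𝕜] F}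
    (hAB : ∀ a b, nijenhuisDefect A B a b = nijenhuisDefect A B b a) (k : ℕ) (u v : F) :
    nijenhuisDefect (A ^ k) (∑ i ∈ range k, A ^ (k.pred - i) •> B <• A ^ i) u v
      = nijenhuisDefect (A ^ k) (∑ i ∈ range k, A ^ (k.pred - i) •> B <• A ^ i) v u := by
  rw [nijenhuisDefect_pow_apply, nijenhuisDefect_pow_apply, sum_comm]
  refine sum_congr rfl fun i _ => sum_congr rfl fun j _ => ?_
  rw [hAB, ← pow_add, ← pow_add, add_comm]

end Defect

theorem tor_eq_nijenhuisDefect_sub {M : E → E →L[ℝ] E} {X Y : E → E} {x : E}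
    (hM : DifferentiableAt ℝ M x) (hX : DifferentiableAt ℝ X x) (hY : DifferentiableAt ℝ Y x) :
    tor M X Y x = nijenhuisDefect (M x) (fderiv ℝ M x) (X x) (Y x)
      - nijenhuisDefect (M x) (fderiv ℝ M x) (Y x) (X x) := by
  have hMX : fderiv ℝ (app M X) x = (M x).comp (fderiv ℝ X x) + (fderiv ℝ M x).flip (X x) :=
    fderiv_clm_apply hM hX
  have hMY : fderiv ℝ (app M Y) x = (M x).comp (fderiv ℝ Y x) + (fderiv ℝ M x).flip (Y x) :=
    fderiv_clm_apply hM hY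
  simp only [tor, lie, app, nijenhuisDefect, hMX, hMY, add_apply,
    ContinuousLinearMap.comp_apply, ContinuousLinearMap.flip_apply, map_sub, map_add]
  abel

theorem nijenhuisDefect_comm_of_tor_const_eq_zero {N : E → E →L[ℝ] E} {x : E}
    (hN : DifferentiableAt ℝ N x) {a b : E} (h : tor N (fun _ => a) (fun _ => b) x = 0) :
    nijenhuisDefect (N x) (fderiv ℝ N x) a b = nijenhuisDefect (N x) (fderiv ℝ N x) b a := by
  rwa [tor_eq_nijenhuisDefect_sub hN (differentiableAt_const a) (differentiableAt_const b),
    sub_eq_zero] at h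

theorem stmt2_general (N : E → E →L[ℝ] E) (hN : ContDiff ℝ (⊤ : ℕ∞) N)
    (hT : ∀ X Y : E → E, ContDiff ℝ (⊤ : ℕ∞) X → ContDiff ℝ (⊤ : ℕ∞) Y →
      ∀ x, tor N X Y x = 0)
    (k : ℕ)
    (X Y : E → E) (hX : ContDiff ℝ (⊤ : ℕ∞) X) (hY : ContDiff ℝ (⊤ : ℕ∞) Y) (x : E) :
    tor (pw N k) X Y x = 0 := by
  have hNx : DifferentiableAt ℝ N x := hN.differentiable (by simp) x
  have hderiv : fderiv ℝ (pw N k) x = ∑ i ∈ range k, N x ^ (k.pred - i) •> fderiv ℝ N x <• N x ^ i :=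
    fderiv_fun_pow' k hNx
  rw [tor_eq_nijenhuisDefect_sub (M := pw N k) (hNx.fun_pow k) (hX.differentiable (by simp) x)
    (hY.differentiable (by simp) x), sub_eq_zero, hderiv]
  exact nijenhuisDefect_pow_comm (fun a b => nijenhuisDefect_comm_of_tor_const_eq_zero hNx
    (hT _ _ contDiff_const contDiff_const x)) k _ _

theorem stmt2 (N : E → E →L[ℝ] E) (hN : ContDiff ℝ (⊤ : ℕ∞) N)
    (hT : ∀ X Y : E → E, ContDiff ℝ (⊤ : ℕ∞) X → ContDiff ℝ (⊤ : ℕ∞) Y →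
      ∀ x, tor N X Y x = 0)
    (k : ℕ) (hk : 0 < k)
    (X Y : E → E) (hX : ContDiff ℝ (⊤ : ℕ∞) X) (hY : ContDiff ℝ (⊤ : ℕ∞) Y) (x : E) :
    tor (pw N k) X Y x = 0 :=
  stmt2_general N hN hT k X Y hX hY x
end

section
/- Let E be a real normed vector space and N a smooth (1,1) tensor field on E with vanishing Nijenhuis torsion, T(N) = 0. Let ρ be a bi-closed 1-form on E, i.e. both ρ and the pullback N*ρ : x ↦ ρ(x) ∘ N(x) are closed. Then for every positive integer k the 1-form (N*)^k ρ : x ↦ ρ(x) ∘ N(x)^k is closed; in particular every (N*)^k ρ is bi-closed. -/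
variable {E : Type*} [NormedAddCommGroup E] [NormedSpace ℝ E]

/-!
For a 1-form `β` write `dβ(u, v) = Dβ(u)(v) − Dβ(v)(u)` and `N*β = β ∘ N`. Evaluating the
torsion on constant vector fields gives `N(DN(u)v − DN(v)u) = DN(Nu)v − DN(Nv)u`, and with it
a direct computation shows, for every 1-form `β`,

  `d(N*²β)(u, v) = d(N*β)(Nu, v) + d(N*β)(u, Nv) − dβ(Nu, Nv)`.

So `d((N*)^(k+2) ρ)` is determined by `d((N*)^(k+1) ρ)` and `d((N*)^k ρ)`, and closedness of
`ρ` and `N*ρ` propagates to all `(N*)^k ρ` by a two-step induction.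
-/

noncomputable def extDerivOneForm (β : E → E →L[ℝ] ℝ) (x u v : E) : ℝ :=
  fderiv ℝ β x u v - fderiv ℝ β x v u

def pullbackOneForm (N : E → E →L[ℝ] E) (β : E → E →L[ℝ] ℝ) : E → E →L[ℝ] ℝ :=
  fun x => (β x).comp (N x)

theorem isClosedOneForm_iff_extDerivOneForm_eq_zero (β : E → E →L[ℝ] ℝ) :
    IsClosedOneForm β ↔ ∀ x u v, extDerivOneForm β x u v = 0 := by
  simp only [IsClosedOneForm, extDerivOneForm, sub_eq_zero]

section Derivatives

variable {G H : Type*} [NormedAddCommGroup G] [NormedSpace ℝ G]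
  [NormedAddCommGroup H] [NormedSpace ℝ H]

theorem fderiv_clm_apply_const_apply {F : E → G →L[ℝ] H} {x : E} (hF : DifferentiableAt ℝ F x)
    (w : G) (u : E) : fderiv ℝ (fun y => F y w) x u = fderiv ℝ F x u w := by
  simp [fderiv_clm_apply hF (differentiableAt_const w)]

theorem fderiv_clm_comp_apply_apply {A : E → G →L[ℝ] H} {B : E → E →L[ℝ] G} {x : E}
    (hA : DifferentiableAt ℝ A x) (hB : DifferentiableAt ℝ B x) (u v : E) :
    fderiv ℝ (fun y => (A y).comp (B y)) x u v
      = A x (fderiv ℝ B x u v) + fderiv ℝ A x u (B x v) := by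
  simp [fderiv_clm_comp hA hB]

end Derivatives

section Pullback

variable {N : E → E →L[ℝ] E} {β : E → E →L[ℝ] ℝ} {x : E}

theorem DifferentiableAt.pullbackOneForm (hβ : DifferentiableAt ℝ β x)
    (hN : DifferentiableAt ℝ N x) : DifferentiableAt ℝ (pullbackOneForm N β) x :=
  hβ.clm_comp hN

theorem Differentiable.pullbackOneForm (hβ : Differentiable ℝ β) (hN : Differentiable ℝ N) :
    Differentiable ℝ (pullbackOneForm N β) :=
  fun x => (hβ x).pullbackOneForm (hN x)

theorem fderiv_pullbackOneForm_apply_apply (hβ : DifferentiableAt ℝ β x)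
    (hN : DifferentiableAt ℝ N x) (u v : E) :
    fderiv ℝ (pullbackOneForm N β) x u v
      = β x (fderiv ℝ N x u v) + fderiv ℝ β x u (N x v) :=
  fderiv_clm_comp_apply_apply hβ hN u v

theorem tor_const_const (hN : DifferentiableAt ℝ N x) (u v : E) :
    tor N (fun _ => u) (fun _ => v) x
      = fderiv ℝ N x (N x u) v - fderiv ℝ N x (N x v) u
        - N x (fderiv ℝ N x u v - fderiv ℝ N x v u) := by
  have happ : ∀ w : E, app N (fun _ => w) = fun y => N y w := fun _ => rfl
  simp only [tor, lie, happ, fderiv_fun_const, fderiv_clm_apply_const_apply hN, Pi.zero_apply,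
    zero_apply, sub_zero, zero_sub, map_sub, map_neg, map_zero]
  abel

theorem extDerivOneForm_pullbackOneForm (hβ : DifferentiableAt ℝ β x)
    (hN : DifferentiableAt ℝ N x) (u v : E) :
    extDerivOneForm (pullbackOneForm N β) x u v
      = β x (fderiv ℝ N x u v - fderiv ℝ N x v u)
        + fderiv ℝ β x u (N x v) - fderiv ℝ β x v (N x u) := by
  simp only [extDerivOneForm, fderiv_pullbackOneForm_apply_apply hβ hN, map_sub]
  ring

theorem extDerivOneForm_pullbackOneForm_pullbackOneForm (hβ : DifferentiableAt ℝ β x)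
    (hN : DifferentiableAt ℝ N x) (hT : ∀ u v, tor N (fun _ => u) (fun _ => v) x = 0)
    (u v : E) :
    extDerivOneForm (pullbackOneForm N (pullbackOneForm N β)) x u v
      = extDerivOneForm (pullbackOneForm N β) x (N x u) v
        + extDerivOneForm (pullbackOneForm N β) x u (N x v)
        - extDerivOneForm β x (N x u) (N x v) := by
  have hTuv : N x (fderiv ℝ N x u v - fderiv ℝ N x v u)
      = fderiv ℝ N x (N x u) v - fderiv ℝ N x (N x v) u := by
    rw [eq_comm, ← sub_eq_zero, ← tor_const_const hN, hT]
  rw [extDerivOneForm_pullbackOneForm (hβ.pullbackOneForm hN) hN,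
    extDerivOneForm_pullbackOneForm hβ hN, extDerivOneForm_pullbackOneForm hβ hN]
  simp only [pullbackOneForm, ContinuousLinearMap.comp_apply, hTuv]
  simp only [extDerivOneForm, fderiv_pullbackOneForm_apply_apply hβ hN, map_sub]
  ring

end Pullback

theorem isClosedOneForm_iterate_pullbackOneForm {N : E → E →L[ℝ] E} {ρ : E → E →L[ℝ] ℝ}
    (hN : Differentiable ℝ N) (hT : ∀ x u v, tor N (fun _ => u) (fun _ => v) x = 0)
    (hρ : Differentiable ℝ ρ) (hclosed : IsClosedOneForm ρ)
    (hNclosed : IsClosedOneForm (pullbackOneForm N ρ)) (k : ℕ) :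
    IsClosedOneForm ((pullbackOneForm N)^[k] ρ) := by
  have hdiff : ∀ m, Differentiable ℝ ((pullbackOneForm N)^[m] ρ) := by
    intro m
    induction m with
    | zero => exact hρ
    | succ m ih => simpa only [Function.iterate_succ_apply'] using ih.pullbackOneForm hN
  induction k using Nat.twoStepInduction with
  | zero => exact hclosed
  | one => exact hNclosed
  | more k hk hk₁ =>
    simp only [isClosedOneForm_iff_extDerivOneForm_eq_zero, Function.iterate_succ_apply']
      at hk hk₁ ⊢
    intro x u v
    rw [extDerivOneForm_pullbackOneForm_pullbackOneForm (hdiff k x) (hN x) (hT x), hk₁, hk₁, hk,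
      sub_zero, add_zero]

theorem iterate_pullbackOneForm_apply (N : E → E →L[ℝ] E) (ρ : E → E →L[ℝ] ℝ) (k : ℕ) (x : E) :
    (pullbackOneForm N)^[k] ρ x = (ρ x).comp ((N x) ^ k) := by
  induction k with
  | zero => rfl
  | succ k ih =>
    rw [Function.iterate_succ_apply', pullbackOneForm, ih, ContinuousLinearMap.comp_assoc,
      pow_succ, ContinuousLinearMap.mul_def]

theorem stmt3_general (N : E → E →L[ℝ] E) (hN : ContDiff ℝ (⊤ : ℕ∞) N)
    (hT : ∀ X Y : E → E, ContDiff ℝ (⊤ : ℕ∞) X → ContDiff ℝ (⊤ : ℕ∞) Y →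
      ∀ x, tor N X Y x = 0)
    (ρ : E → E →L[ℝ] ℝ) (hρ : ContDiff ℝ (⊤ : ℕ∞) ρ)
    (hclosed : IsClosedOneForm ρ)
    (hNclosed : IsClosedOneForm fun x => (ρ x).comp (N x))
    (k : ℕ) :
    IsClosedOneForm (fun x => (ρ x).comp ((N x) ^ k)) ∧
      IsClosedOneForm (fun x => ((ρ x).comp ((N x) ^ k)).comp (N x)) := by
  have hclosed_iterate : ∀ m, IsClosedOneForm ((pullbackOneForm N)^[m] ρ) :=
    isClosedOneForm_iterate_pullbackOneForm (hN.differentiable (by simp))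
      (fun x u v => hT _ _ contDiff_const contDiff_const x) (hρ.differentiable (by simp))
      hclosed hNclosed
  have hpow : ∀ m, (fun x => (ρ x).comp ((N x) ^ m)) = (pullbackOneForm N)^[m] ρ :=
    fun m => funext fun x => (iterate_pullbackOneForm_apply N ρ m x).symm
  refine ⟨hpow k ▸ hclosed_iterate k, ?_⟩
  have hclosed_succ := hclosed_iterate (k + 1)
  rw [Function.iterate_succ_apply', ← hpow] at hclosed_succ
  exact hclosed_succ

theorem stmt3 (N : E → E →L[ℝ] E) (hN : ContDiff ℝ (⊤ : ℕ∞) N)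
    (hT : ∀ X Y : E → E, ContDiff ℝ (⊤ : ℕ∞) X → ContDiff ℝ (⊤ : ℕ∞) Y →
      ∀ x, tor N X Y x = 0)
    (ρ : E → E →L[ℝ] ℝ) (hρ : ContDiff ℝ (⊤ : ℕ∞) ρ)
    (hclosed : IsClosedOneForm ρ)
    (hNclosed : IsClosedOneForm fun x => (ρ x).comp (N x))
    (k : ℕ) (hk : 0 < k) :
    IsClosedOneForm (fun x => (ρ x).comp ((N x) ^ k)) ∧
      IsClosedOneForm (fun x => ((ρ x).comp ((N x) ^ k)).comp (N x)) :=
  stmt3_general N hN hT ρ hρ hclosed hNclosed k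
end

section
/- Let E be a real normed vector space, A, B smooth (1,1) tensor fields on E, f : E → ℝ a smooth function, and X a vector field on E. Then [A, fB]_X = f·[A,B]_X + df(AX)·BX − df(X)·ABX, where df(Z) denotes the scalar function x ↦ Df(x)(Z(x)) and scalar functions multiply vector fields pointwise. -/
variable {E : Type*} [NormedAddCommGroup E] [NormedSpace ℝ E]

/-! The only analytic input is the Leibniz rule `[W, f Z] = df(W) Z + f [W, Z]`, applied to
`[AX, f BX]` and `[X, f BX]`; the term `B[X, AX]` is merely scaled by `f`. -/

theorem app_smul (f : E → ℝ) (N : E → E →L[ℝ] E) (X : E → E) :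
    app (fun p => f p • N p) X = fun p => f p • app N X p := rfl

theorem lie_smul_right {f : E → ℝ} {Z : E → E} {x : E} (hf : DifferentiableAt ℝ f x)
    (hZ : DifferentiableAt ℝ Z x) (W : E → E) :
    lie W (fun p => f p • Z p) x = fderiv ℝ f x (W x) • Z x + f x • lie W Z x :=
  VectorField.lieBracket_smul_right hf hZ

theorem brX_smul_right (A B : E → E →L[ℝ] E) {f : E → ℝ} {X : E → E} {x : E}
    (hf : DifferentiableAt ℝ f x) (hBX : DifferentiableAt ℝ (app B X) x) :
    brX A (fun p => f p • B p) X x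
      = f x • brX A B X x + fderiv ℝ f x (A x (X x)) • B x (X x)
          - fderiv ℝ f x (X x) • A x (B x (X x)) := by
  rw [brX, brX, app_smul, lie_smul_right hf hBX, lie_smul_right hf hBX]
  simp only [app, map_add, map_smul, smul_add, smul_sub]
  abel

theorem stmt6_general (A B : E → E →L[ℝ] E)
    (hB : ContDiff ℝ (⊤ : ℕ∞) B)
    (f : E → ℝ) (hf : ContDiff ℝ (⊤ : ℕ∞) f)
    (X : E → E) (hX : ContDiff ℝ (⊤ : ℕ∞) X) (x : E) :
    brX A (fun p => f p • B p) X x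
      = f x • brX A B X x + fderiv ℝ f x (A x (X x)) • B x (X x)
          - fderiv ℝ f x (X x) • A x (B x (X x)) :=
  brX_smul_right A B (hf.differentiable (by simp) x)
    ((hB.differentiable (by simp) x).clm_apply (hX.differentiable (by simp) x))

theorem stmt6 (A B : E → E →L[ℝ] E)
    (hA : ContDiff ℝ (⊤ : ℕ∞) A) (hB : ContDiff ℝ (⊤ : ℕ∞) B)
    (f : E → ℝ) (hf : ContDiff ℝ (⊤ : ℕ∞) f)
    (X : E → E) (hX : ContDiff ℝ (⊤ : ℕ∞) X) (x : E) :
    brX A (fun p => f p • B p) X x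
      = f x • brX A B X x + fderiv ℝ f x (A x (X x)) • B x (X x)
          - fderiv ℝ f x (X x) • A x (B x (X x)) :=
  stmt6_general A B hB f hf X hX x
end

section
/- Let E be a real normed vector space, A, B smooth (1,1) tensor fields on E, and x : ℝ³ → E, (s,t,y) ↦ x(s,t,y), a smooth common solution of the two hydrodynamic-type systems ∂x/∂s + A(x)(∂x/∂y) = 0 and ∂x/∂t + B(x)(∂x/∂y) = 0. Then at every point (s,t,y), writing x_y = ∂x/∂y and x_yy = ∂²x/∂y²: (DA)(x)(B(x)x_y)(x_y) + A(x)( (DB)(x)(x_y)(x_y) ) − (DB)(x)(A(x)x_y)(x_y) − B(x)( (DA)(x)(x_y)(x_y) ) + (A(x)B(x) − B(x)A(x))(x_yy) = 0, where (DA)(x) : E → L(E,E) is the Fréchet derivative of A at x. -/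
variable {E : Type*} [NormedAddCommGroup E] [NormedSpace ℝ E]

theorem stmt7 (A B : E → E →L[ℝ] E)
    (hA : ContDiff ℝ (⊤ : ℕ∞) A) (hB : ContDiff ℝ (⊤ : ℕ∞) B)
    (u : ℝ × ℝ × ℝ → E) (hu : ContDiff ℝ (⊤ : ℕ∞) u)
    (hpdeA : ∀ p : ℝ × ℝ × ℝ,
      fderiv ℝ u p (1, 0, 0) + A (u p) (fderiv ℝ u p (0, 0, 1)) = 0)
    (hpdeB : ∀ p : ℝ × ℝ × ℝ,
      fderiv ℝ u p (0, 1, 0) + B (u p) (fderiv ℝ u p (0, 0, 1)) = 0)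
    (p : ℝ × ℝ × ℝ) :
    fderiv ℝ A (u p) (B (u p) (fderiv ℝ u p (0, 0, 1))) (fderiv ℝ u p (0, 0, 1))
      + A (u p) (fderiv ℝ B (u p) (fderiv ℝ u p (0, 0, 1)) (fderiv ℝ u p (0, 0, 1)))
      - fderiv ℝ B (u p) (A (u p) (fderiv ℝ u p (0, 0, 1))) (fderiv ℝ u p (0, 0, 1))
      - B (u p) (fderiv ℝ A (u p) (fderiv ℝ u p (0, 0, 1)) (fderiv ℝ u p (0, 0, 1)))
      + ((A (u p)).comp (B (u p)) - (B (u p)).comp (A (u p)))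
          (fderiv ℝ (fun q => fderiv ℝ u q (0, 0, 1)) p (0, 0, 1)) = 0 := by
  have hud : Differentiable ℝ u := hu.differentiable (by simp)
  set es : ℝ × ℝ × ℝ := (1, 0, 0) with hes
  set et : ℝ × ℝ × ℝ := (0, 1, 0) with het
  set ey : ℝ × ℝ × ℝ := (0, 0, 1) with hey
  set f' : ℝ × ℝ × ℝ → (ℝ × ℝ × ℝ) →L[ℝ] E := fderiv ℝ u with hf'def
  have hf'c : ContDiff ℝ (⊤ : ℕ∞) f' := hu.fderiv_right (by simp)
  have hf'd : ∀ q, HasFDerivAt u (f' q) q := fun q => (hud q).hasFDerivAt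
  set f'' : (ℝ × ℝ × ℝ) →L[ℝ] (ℝ × ℝ × ℝ) →L[ℝ] E := fderiv ℝ f' p with hf''def
  have hf'' : HasFDerivAt f' f'' p := (hf'c.differentiable (by simp) p).hasFDerivAt
  have hsymm : ∀ v w, f'' v w = f'' w v := second_derivative_symmetric hf'd hf'' 
  -- derivative of q ↦ f' q w
  have happ : ∀ w : ℝ × ℝ × ℝ, HasFDerivAt (fun q => f' q w) (f''.flip w) p := by
    intro w
    simpa using hf''.clm_apply (hasFDerivAt_const w p)
  -- derivative of q ↦ N (u q) (f' q w) for N ∈ {A,B}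
  have hcomp : ∀ (N : E → E →L[ℝ] E), ContDiff ℝ (⊤ : ℕ∞) N → ∀ w : ℝ × ℝ × ℝ,
      HasFDerivAt (fun q => N (u q) (f' q w))
        (((N (u p)).comp (f''.flip w)) + ((fderiv ℝ N (u p)).comp (f' p)).flip (f' p w)) p := by
    intro N hN w
    exact HasFDerivAt.clm_apply
      (((hN.differentiable (by simp) (u p)).hasFDerivAt.comp p (hf'd p))) (happ w)
  -- derivative of the PDE residual is zero
  have hres : ∀ (N : E → E →L[ℝ] E), ContDiff ℝ (⊤ : ℕ∞) N → ∀ (e : ℝ × ℝ × ℝ),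
      (∀ q, f' q e + N (u q) (f' q ey) = 0) → ∀ v,
      f'' v e + (fderiv ℝ N (u p)) (f' p v) (f' p ey) + N (u p) (f'' v ey) = 0 := by
    intro N hN e hpde v
    have h0 : HasFDerivAt (fun q => f' q e + N (u q) (f' q ey))
        ((f''.flip e) + (((N (u p)).comp (f''.flip ey)) + ((fderiv ℝ N (u p)).comp (f' p)).flip (f' p ey))) p :=
      (happ e).add (hcomp N hN ey)
    have h1 : HasFDerivAt (fun _ : ℝ × ℝ × ℝ => (0 : E))
        ((f''.flip e) + (((N (u p)).comp (f''.flip ey)) + ((fderiv ℝ N (u p)).comp (f' p)).flip (f' p ey))) p := by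
      apply h0.congr_of_eventuallyEq
      filter_upwards with q using (hpde q).symm
    have h2 := h1.unique (hasFDerivAt_const 0 p)
    have h3 := congrFun (congrArg DFunLike.coe h2) v
    simp only [ContinuousLinearMap.add_apply, ContinuousLinearMap.flip_apply,
      ContinuousLinearMap.comp_apply, ContinuousLinearMap.zero_apply] at h3
    linear_combination (norm := abel) h3
  -- abbreviations
  set xy := f' p ey with hxy
  set xyy := f'' ey ey with hxyy
  have hAp : f' p es = -(A (u p) xy) := by
    have := hpdeA p; rw [eq_neg_iff_add_eq_zero]; exact this
  have hBp : f' p et = -(B (u p) xy) := by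
    have := hpdeB p; rw [eq_neg_iff_add_eq_zero]; exact this
  have e1 := hres A hA es hpdeA et
  have e2 := hres B hB et hpdeB es
  have e3 := hres A hA es hpdeA ey
  have e4 := hres B hB et hpdeB ey
  rw [hBp] at e1
  rw [hAp] at e2
  -- rewrite the mixed second derivative term in the goal
  have hxyy' : fderiv ℝ (fun q => fderiv ℝ u q ey) p ey = xyy := by
    rw [(happ ey).fderiv]; rfl
  rw [hxyy']
  -- from e3, e4 express f'' ey es etc; use symmetry
  have k1 : f'' et es = fderiv ℝ A (u p) (B (u p) xy) xy - A (u p) (f'' et ey) := by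
    have := e1
    simp only [map_neg, ContinuousLinearMap.neg_apply] at this
    linear_combination (norm := abel) this
  have k2 : f'' es et = fderiv ℝ B (u p) (A (u p) xy) xy - B (u p) (f'' es ey) := by
    have := e2
    simp only [map_neg, ContinuousLinearMap.neg_apply] at this
    linear_combination (norm := abel) this
  have k3 : f'' ey et = -(fderiv ℝ B (u p) xy xy) - B (u p) xyy := by
    linear_combination (norm := abel) e4
  have k4 : f'' ey es = -(fderiv ℝ A (u p) xy xy) - A (u p) xyy := by
    linear_combination (norm := abel) e3
  have key : fderiv ℝ A (u p) (B (u p) xy) xy + A (u p) (fderiv ℝ B (u p) xy xy) + A (u p) (B (u p) xyy)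
      = fderiv ℝ B (u p) (A (u p) xy) xy + B (u p) (fderiv ℝ A (u p) xy xy) + B (u p) (A (u p) xyy) := by
    have h1 : f'' et es = f'' es et := hsymm et es
    rw [k1, k2, hsymm et ey, hsymm es ey, k3, k4] at h1
    simp only [map_sub, map_neg, map_add] at h1
    linear_combination (norm := abel) h1
  simp only [ContinuousLinearMap.sub_apply, ContinuousLinearMap.comp_apply]
  linear_combination (norm := abel) key
end

section
/- Let E be a real normed vector space and N a smooth (1,1) tensor field on E with vanishing Nijenhuis torsion, T(N) = 0. Then for all nonnegative integers i, j and every vector field X on E, [N^i, N^j]_X = 0, where N^k denotes the pointwise k-th power (N^0 = I the identity). Consequently, the hydrodynamic-type flows ∂x/∂t_k + N(x)^k(∂x/∂y) = 0, k = 1,2,…, are pairwise compatible and form a hierarchy. -/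
variable {E : Type*} [NormedAddCommGroup E] [NormedSpace ℝ E]

/-!
Fix `x` and write `n = N x`, `ξ = X x`, `B u v = DN(x) u v`. Since `N ^ i` and `N ^ j` commute
pointwise, the derivative of `X` cancels from `[N^i, N^j]_X (x)`, which becomes
`D(N^j)(n^i ξ) ξ - n^i (D(N^j)(ξ) ξ)` minus the same with `i` and `j` exchanged. Telescoping writes
this difference as a double sum over `r < j`, `t < i` of powers of `n` applied to
`C(n^t ξ, n^r ξ)`, where `C u v = B (n u) v - n (B u v)`. The torsion on constant fields is
`C u v - C v u`, so `C` is symmetric, and so is the double sum in `i` and `j`.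
-/

open Finset

section PowDeriv

variable {R M : Type*} [Semiring R] [AddCommGroup M] [Module R M]

/-- If `n = N x` and `B u = DN(x) u` for a field of endomorphisms `N`, then `powDeriv n B k u`
is `D(N ^ k)(x) u`. -/
def powDeriv (n : Module.End R M) (B : M → M → M) (k : ℕ) (u v : M) : M :=
  ∑ r ∈ range k, (n ^ (k - 1 - r)) (B u ((n ^ r) v))

theorem apply_pow_sub_pow_apply_eq_sum (n : Module.End R M) (B : M → M → M) (i : ℕ)
    (ξ w : M) :
    B ((n ^ i) ξ) w - (n ^ i) (B ξ w) =
      ∑ t ∈ range i, (n ^ (i - 1 - t)) (B (n ((n ^ t) ξ)) w - n (B ((n ^ t) ξ) w)) := by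
  have hterm : ∀ t ∈ range i, (n ^ (i - 1 - t)) (B (n ((n ^ t) ξ)) w - n (B ((n ^ t) ξ) w)) =
      (n ^ (i - (t + 1))) (B ((n ^ (t + 1)) ξ) w) - (n ^ (i - t)) (B ((n ^ t) ξ) w) := by
    intro t ht
    have h1 : i - (t + 1) = i - 1 - t := by omega
    have h2 : i - t = i - 1 - t + 1 := by have := mem_range.mp ht; omega
    rw [h1, h2, pow_succ n (i - 1 - t), pow_succ' n t, Module.End.mul_apply,
      Module.End.mul_apply, map_sub]
  rw [sum_congr rfl hterm, sum_range_sub (fun t => (n ^ (i - t)) (B ((n ^ t) ξ) w))]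
  simp

theorem powDeriv_pow_sub_pow_powDeriv (n : Module.End R M) (B : M → M → M) (i j : ℕ) (ξ : M) :
    powDeriv n B j ((n ^ i) ξ) ξ - (n ^ i) (powDeriv n B j ξ ξ) =
      ∑ r ∈ range j, ∑ t ∈ range i, (n ^ (j - 1 - r + (i - 1 - t)))
        (B (n ((n ^ t) ξ)) ((n ^ r) ξ) - n (B ((n ^ t) ξ) ((n ^ r) ξ))) := by
  rw [powDeriv, powDeriv, map_sum, ← sum_sub_distrib]
  refine sum_congr rfl fun r _ => ?_
  rw [← Module.End.mul_apply, ← pow_mul_comm, Module.End.mul_apply, ← map_sub,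
    apply_pow_sub_pow_apply_eq_sum, map_sum]
  simp only [pow_add, Module.End.mul_apply]

theorem powDeriv_pow_sub_pow_powDeriv_comm (n : Module.End R M) (B : M → M → M)
    (hB : ∀ u v, B (n u) v - n (B u v) = B (n v) u - n (B v u)) (i j : ℕ) (ξ : M) :
    powDeriv n B j ((n ^ i) ξ) ξ - (n ^ i) (powDeriv n B j ξ ξ) =
      powDeriv n B i ((n ^ j) ξ) ξ - (n ^ j) (powDeriv n B i ξ ξ) := by
  rw [powDeriv_pow_sub_pow_powDeriv, powDeriv_pow_sub_pow_powDeriv, sum_comm]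
  refine sum_congr rfl fun t _ => sum_congr rfl fun r _ => ?_
  rw [add_comm, hB]

end PowDeriv

section TensorFields

variable {x : E}

theorem fderiv_app_apply {A : E → E →L[ℝ] E} {X : E → E} (hA : DifferentiableAt ℝ A x)
    (hX : DifferentiableAt ℝ X x) (w : E) :
    fderiv ℝ (app A X) x w = A x (fderiv ℝ X x w) + fderiv ℝ A x w (X x) := by
  show fderiv ℝ (fun y => A y (X y)) x w = _
  rw [fderiv_clm_apply hA hX]
  rfl

theorem brX_eq_of_commute {A B : E → E →L[ℝ] E} {X : E → E} (hA : DifferentiableAt ℝ A x)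
    (hB : DifferentiableAt ℝ B x) (hX : DifferentiableAt ℝ X x) (hAB : Commute (A x) (B x)) :
    brX A B X x =
      fderiv ℝ B x (A x (X x)) (X x) - fderiv ℝ A x (B x (X x)) (X x)
        - A x (fderiv ℝ B x (X x) (X x)) + B x (fderiv ℝ A x (X x) (X x)) := by
  have hBA : B x (A x (fderiv ℝ X x (X x))) = A x (B x (fderiv ℝ X x (X x))) :=
    (congrArg (· (fderiv ℝ X x (X x))) hAB.eq).symm
  simp only [brX, lie, app, fderiv_app_apply hA hX, fderiv_app_apply hB hX, map_add, map_sub]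
  linear_combination (norm := abel) hBA

theorem fderiv_pw_apply {N : E → E →L[ℝ] E} (hN : DifferentiableAt ℝ N x) (k : ℕ) (u v : E) :
    fderiv ℝ (pw N k) x u v =
      powDeriv (N x : Module.End ℝ E) (fun u v => fderiv ℝ N x u v) k u v := by
  show fderiv ℝ (fun y => N y ^ k) x u v = _
  rw [fderiv_fun_pow' k hN, powDeriv]
  simp [← ContinuousLinearMap.toLinearMap_pow]

theorem tor_const_apply {N : E → E →L[ℝ] E} (hN : DifferentiableAt ℝ N x) (u v : E) :
    tor N (fun _ => u) (fun _ => v) x =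
      (fderiv ℝ N x (N x u) v - N x (fderiv ℝ N x u v))
        - (fderiv ℝ N x (N x v) u - N x (fderiv ℝ N x v u)) := by
  simp only [tor, lie, fderiv_app_apply hN (differentiableAt_const _), fderiv_const_apply,
    zero_apply, map_zero, sub_zero, zero_add, zero_sub, map_sub, map_neg, app]
  abel

end TensorFields

theorem stmt8 (N : E → E →L[ℝ] E) (hN : ContDiff ℝ (⊤ : ℕ∞) N)
    (hT : ∀ X Y : E → E, ContDiff ℝ (⊤ : ℕ∞) X → ContDiff ℝ (⊤ : ℕ∞) Y →
      ∀ x, tor N X Y x = 0)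
    (i j : ℕ) (X : E → E) (hX : ContDiff ℝ (⊤ : ℕ∞) X) (x : E) :
    brX (pw N i) (pw N j) X x = 0 := by
  have hNd : Differentiable ℝ N := hN.differentiable (by simp)
  have hXd : Differentiable ℝ X := hX.differentiable (by simp)
  have hsymm : ∀ u v, fderiv ℝ N x (N x u) v - N x (fderiv ℝ N x u v) =
      fderiv ℝ N x (N x v) u - N x (fderiv ℝ N x v u) := fun u v =>
    sub_eq_zero.mp <| (tor_const_apply (hNd x) u v).symm.trans <|
      hT _ _ contDiff_const contDiff_const x
  have hpow : ∀ k v, pw N k x v = ((N x : Module.End ℝ E) ^ k) v := fun k v => by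
    simp [pw, ← ContinuousLinearMap.toLinearMap_pow]
  rw [brX_eq_of_commute (A := pw N i) (B := pw N j) ((hNd.pow i) x) ((hNd.pow j) x) (hXd x)
    ((Commute.refl (N x)).pow_pow i j)]
  simp only [fderiv_pw_apply (hNd x), hpow]
  linear_combination (norm := abel)
    powDeriv_pow_sub_pow_powDeriv_comm (N x : Module.End ℝ E) (fun u v => fderiv ℝ N x u v)
      hsymm i j (X x)
end

section
/- Let E be a real normed vector space and N a smooth (1,1) tensor field on E with vanishing Nijenhuis torsion, T(N) = 0. Then for all nonnegative integers i, j and every vector field X on E the recursion identity [N^{i+1}, N^{j+1}]_X = −N²[N^i, N^j]_X + N( [N^{i+1}, N^j]_X + [N^i, N^{j+1}]_X ) holds, where N^k denotes the pointwise k-th power. -/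
variable {E : Type*} [NormedAddCommGroup E] [NormedSpace ℝ E]

theorem stmt9 (N : E → E →L[ℝ] E) (hN : ContDiff ℝ (⊤ : ℕ∞) N)
    (hT : ∀ X Y : E → E, ContDiff ℝ (⊤ : ℕ∞) X → ContDiff ℝ (⊤ : ℕ∞) Y →
      ∀ x, tor N X Y x = 0)
    (i j : ℕ) (X : E → E) (hX : ContDiff ℝ (⊤ : ℕ∞) X) (x : E) :
    brX (pw N (i + 1)) (pw N (j + 1)) X x
      = -(N x (N x (brX (pw N i) (pw N j) X x)))
        + N x (brX (pw N (i + 1)) (pw N j) X x + brX (pw N i) (pw N (j + 1)) X x) := by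
  have pw_succ : ∀ (k : ℕ) (y v : E), pw N (k + 1) y v = N y (pw N k y v) := by
    intro k y v
    simp [pw, pow_succ', ContinuousLinearMap.mul_apply]
  have app_pw_succ : ∀ (k : ℕ) (Y : E → E),
      app (pw N (k + 1)) Y = app N (app (pw N k) Y) := by
    intro k Y
    funext y
    exact pw_succ k y (Y y)
  set A := app (pw N i) X with hAdef
  set B := app (pw N j) X with hBdef
  have hA : ContDiff ℝ (⊤ : ℕ∞) A := (hN.pow i).clm_apply hX
  have hB : ContDiff ℝ (⊤ : ℕ∞) B := (hN.pow j).clm_apply hX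
  have h1 : lie (app N A) (app N B) x
      = -(N x (N x (lie A B x) - lie (app N A) B x - lie A (app N B) x)) := by
    have h := hT A B hA hB x
    simp only [tor] at h
    exact eq_neg_of_add_eq_zero_left h
  simp only [brX, app_pw_succ, pw_succ, ← hAdef, ← hBdef, h1, map_add, map_sub, map_neg]
  abel
end

section
/- Let E be a real normed vector space and N a smooth (1,1) tensor field on E with vanishing Nijenhuis torsion, T(N) = 0. Let M_i, M_j, A_i, A_j, M_{i+1}, M_{j+1} be smooth (1,1) tensor fields on E satisfying M_{i+1} = N M_i + A_i and M_{j+1} = N M_j + A_j (pointwise compositions and sums). Then for every vector field X on E: [M_{i+1}, M_{j+1}]_X = −N²[M_i, M_j]_X + N( [M_{i+1}, M_j]_X − [M_{j+1}, M_i]_X − [A_i, M_j]_X + [A_j, M_i]_X ) + [M_{i+1}, A_j]_X − [M_{j+1}, A_i]_X − [A_i, A_j]_X. -/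
variable {E : Type*} [NormedAddCommGroup E] [NormedSpace ℝ E]

/-!
The bracket `[A,B]_X` is antisymmetric in `A, B` and additive in each of them, so substituting
`M_{i+1} = N M_i + A_i`, `M_{j+1} = N M_j + A_j` and expanding reduces the identity to the case
`A_i = A_j = 0`:
`[N M_i, N M_j]_X = -N²[M_i, M_j]_X + N([N M_i, M_j]_X + [M_i, N M_j]_X)`.
Unfolding the brackets, the terms `N M_j [X, N M_i X]` and `N M_i [X, N M_j X]` appear on both
sides, and what remains is exactly `T(N)(M_i X, M_j X) = 0`.
-/

section Brackets

theorem lie_swap (X Y : E → E) (x : E) : lie Y X x = -lie X Y x :=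
  (neg_sub _ _).symm

theorem app_add (A A' : E → E →L[ℝ] E) (X : E → E) : app (A + A') X = app A X + app A' X :=
  rfl

theorem brX_swap (A B : E → E →L[ℝ] E) (X : E → E) (x : E) :
    brX B A X x = -brX A B X x := by
  rw [brX, brX, lie_swap]
  abel

variable {X Y Z W : E → E} {x : E}

theorem lie_add_left (hY : DifferentiableAt ℝ Y x) (hZ : DifferentiableAt ℝ Z x) :
    lie (Y + Z) W x = lie Y W x + lie Z W x := by
  simp only [lie, fderiv_add hY hZ, Pi.add_apply, map_add, add_apply]
  abel

theorem lie_add_right (hY : DifferentiableAt ℝ Y x) (hZ : DifferentiableAt ℝ Z x) :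
    lie W (Y + Z) x = lie W Y x + lie W Z x := by
  rw [lie_swap, lie_add_left hY hZ, lie_swap W Y, lie_swap W Z, neg_add, neg_neg, neg_neg]

variable {A A' B N M₁ M₂ : E → E →L[ℝ] E}

theorem brX_add_left (hA : DifferentiableAt ℝ (app A X) x)
    (hA' : DifferentiableAt ℝ (app A' X) x) :
    brX (A + A') B X x = brX A B X x + brX A' B X x := by
  simp only [brX, app_add, lie_add_left hA hA', lie_add_right hA hA', Pi.add_apply,
    map_add, add_apply]
  abel

theorem brX_add_right (hA : DifferentiableAt ℝ (app A X) x)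
    (hA' : DifferentiableAt ℝ (app A' X) x) :
    brX B (A + A') X x = brX B A X x + brX B A' X x := by
  rw [brX_swap, brX_add_left hA hA', brX_swap B A, brX_swap B A', neg_add, neg_neg, neg_neg]

theorem lie_app_app_of_tor_eq_zero (h : tor N Y Z x = 0) :
    lie (app N Y) (app N Z) x
      = -N x (N x (lie Y Z x)) + N x (lie (app N Y) Z x + lie Y (app N Z) x) := by
  rw [tor, add_eq_zero_iff_eq_neg] at h
  rw [h, map_sub, map_sub, map_add]
  abel

theorem brX_comp_comp_of_tor_eq_zero (h : tor N (app M₁ X) (app M₂ X) x = 0) :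
    brX (fun y => (N y).comp (M₁ y)) (fun y => (N y).comp (M₂ y)) X x
      = -N x (N x (brX M₁ M₂ X x))
        + N x (brX (fun y => (N y).comp (M₁ y)) M₂ X x
          + brX M₁ (fun y => (N y).comp (M₂ y)) X x) := by
  have hcomp : ∀ M : E → E →L[ℝ] E, app (fun y => (N y).comp (M y)) X = app N (app M X) :=
    fun _ => rfl
  simp only [brX, hcomp, lie_app_app_of_tor_eq_zero h, ContinuousLinearMap.comp_apply,
    map_add, map_sub]
  abel

end Brackets

theorem stmt10 (N : E → E →L[ℝ] E) (hN : ContDiff ℝ (⊤ : ℕ∞) N)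
    (hT : ∀ X Y : E → E, ContDiff ℝ (⊤ : ℕ∞) X → ContDiff ℝ (⊤ : ℕ∞) Y →
      ∀ x, tor N X Y x = 0)
    (Mi Mj Ai Aj Mi' Mj' : E → E →L[ℝ] E)
    (hMi : ContDiff ℝ (⊤ : ℕ∞) Mi) (hMj : ContDiff ℝ (⊤ : ℕ∞) Mj)
    (hAi : ContDiff ℝ (⊤ : ℕ∞) Ai) (hAj : ContDiff ℝ (⊤ : ℕ∞) Aj)
    (hMi' : ∀ x, Mi' x = (N x).comp (Mi x) + Ai x)
    (hMj' : ∀ x, Mj' x = (N x).comp (Mj x) + Aj x)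
    (X : E → E) (hX : ContDiff ℝ (⊤ : ℕ∞) X) (x : E) :
    brX Mi' Mj' X x
      = -(N x (N x (brX Mi Mj X x)))
        + N x (brX Mi' Mj X x - brX Mj' Mi X x - brX Ai Mj X x + brX Aj Mi X x)
        + brX Mi' Aj X x - brX Mj' Ai X x - brX Ai Aj X x := by
  obtain rfl : Mi' = (fun y => (N y).comp (Mi y)) + Ai := funext hMi'
  obtain rfl : Mj' = (fun y => (N y).comp (Mj y)) + Aj := funext hMj'
  have hdiff : ∀ {M : E → E →L[ℝ] E}, ContDiff ℝ (⊤ : ℕ∞) M →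
      DifferentiableAt ℝ (app M X) x :=
    fun hM => ((hM.clm_apply hX).differentiable (by simp)).differentiableAt
  have hNi := hdiff (hN.clm_comp hMi)
  have hNj := hdiff (hN.clm_comp hMj)
  have hkey := brX_comp_comp_of_tor_eq_zero (hT _ _ (hMi.clm_apply hX) (hMj.clm_apply hX) x)
  simp only [brX_add_left hNi (hdiff hAi), brX_add_left hNj (hdiff hAj),
    brX_add_right hNj (hdiff hAj)]
  rw [hkey, brX_swap Mi (fun y => (N y).comp (Mj y)), brX_swap Mi Aj,
    brX_swap Ai (fun y => (N y).comp (Mj y)), brX_swap Ai Aj]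
  simp only [map_add, map_sub, map_neg]
  abel
end

section
/- Let E be a real normed vector space and M, N smooth (1,1) tensor fields on E that commute pointwise, M(x)N(x) = N(x)M(x) for all x. Suppose there are a nonnegative integer m and smooth 1-forms φ₀, …, φ_m : E → L(E,ℝ) such that the Nijenhuis torsion of M has the form T(M)(X,Y)(x) = Σ_{i=0}^{m} ( φ_i(x)(Y(x))·N(x)^i(X(x)) − φ_i(x)(X(x))·N(x)^i(Y(x)) ) for all vector fields X, Y and all x ∈ E. Then the Haantjes tensor of M vanishes: H(M)(X,Y) = 0 for all vector fields X, Y. -/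
variable {E : Type*} [NormedAddCommGroup E] [NormedSpace ℝ E]

theorem stmt15 (M N : E → E →L[ℝ] E)
    (hM : ContDiff ℝ (⊤ : ℕ∞) M) (hN : ContDiff ℝ (⊤ : ℕ∞) N)
    (hcomm : ∀ x, (M x).comp (N x) = (N x).comp (M x))
    (m : ℕ) (φ : ℕ → E → E →L[ℝ] ℝ) (hφ : ∀ i ≤ m, ContDiff ℝ (⊤ : ℕ∞) (φ i))
    (hT : ∀ X Y : E → E, ContDiff ℝ (⊤ : ℕ∞) X → ContDiff ℝ (⊤ : ℕ∞) Y → ∀ x,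
      tor M X Y x = ∑ i ∈ Finset.range (m + 1),
        (φ i x (Y x) • ((N x) ^ i) (X x) - φ i x (X x) • ((N x) ^ i) (Y x)))
    (X Y : E → E) (hX : ContDiff ℝ (⊤ : ℕ∞) X) (hY : ContDiff ℝ (⊤ : ℕ∞) Y) (x : E) :
    haan M X Y x = 0 := by
  have hMX : ContDiff ℝ (⊤ : ℕ∞) (app M X) := hM.clm_apply hX
  have hMY : ContDiff ℝ (⊤ : ℕ∞) (app M Y) := hM.clm_apply hY
  have hc : ∀ i : ℕ, ∀ v : E, M x (((N x) ^ i) v) = ((N x) ^ i) (M x v) := by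
    intro i v
    have hco : Commute (M x) (N x) := hcomm x
    have := (hco.pow_right i)
    calc M x (((N x) ^ i) v) = ((M x) * ((N x) ^ i)) v := rfl
      _ = (((N x) ^ i) * (M x)) v := by rw [this]
      _ = ((N x) ^ i) (M x v) := rfl
  simp only [haan]
  rw [hT X Y hX hY x, hT (app M X) (app M Y) hMX hMY x, hT (app M X) Y hMX hY x,
    hT X (app M Y) hX hMY x]
  simp only [map_sum, map_add, map_sub, map_smul, app, hc, ← Finset.sum_add_distrib,
    ← Finset.sum_sub_distrib]
  apply Finset.sum_eq_zero
  intro i _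
  abel
end

section
/- Let E be a real normed vector space, N a smooth (1,1) tensor field on E with vanishing Nijenhuis torsion T(N) = 0, and a₀, …, a_{k-1} : E → ℝ smooth functions (k ≥ 1). Define the (1,1) tensor field M_k = N^k − Σ_{i=0}^{k-1} a_{k-1-i}·N^i (pointwise powers, sums and scalar multiples). Then the Nijenhuis torsion of M_k has the form (*): there exist a nonnegative integer m and smooth 1-forms φ₀, …, φ_m : E → L(E,ℝ) such that T(M_k)(X,Y)(x) = Σ_{i=0}^{m} ( φ_i(x)(Y(x))·N(x)^i(X(x)) − φ_i(x)(X(x))·N(x)^i(Y(x)) ) for all vector fields X, Y and all x ∈ E. -/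
variable {E : Type*} [NormedAddCommGroup E] [NormedSpace ℝ E]

/-!
At a point `x`, the torsion of a tensor field `M` depends only on `M x` and `DM(x)`, through the
bilinear pairing `τ(P, n)(u, v) = P (n u) v - P (n v) u + n (P v u) - n (P u v)` with
`P = DM(x)`, `n = M x`. For `M = ∑ cᵢ Nⁱ` we have `DM = ∑ cᵢ D(Nⁱ) + dcᵢ ⊗ Nⁱ`, so `τ(DM, M)` is
the sum of `∑ cᵢ cⱼ τ(D(Nⁱ), Nʲ)` and of terms `cⱼ τ(dcᵢ ⊗ Nⁱ, Nʲ)`, which are already of the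
form (*). The first sum vanishes: with `Z(u, v) = DN(N u) v - N (DN(u) v)`, the hypothesis
`T(N) = 0` says that `Z` is symmetric, and expanding `D(Nⁱ)` by the Leibniz rule writes
`τ(D(Nⁱ), Nʲ)` as a double sum of terms `Nᵃ Z(Nᵇ u, Nᶜ v)` which changes sign when `i` and `j`
are swapped.
-/

open Finset
open scoped RightActions

noncomputable def torsionPairing :
    (E →L[ℝ] E →L[ℝ] E) →ₗ[ℝ] (E →L[ℝ] E) →ₗ[ℝ] E → E → E :=
  LinearMap.mk₂ ℝ (fun Q A u v => Q (A u) v - Q (A v) u + A (Q v u) - A (Q u v))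
    (fun _ _ _ => by ext; simp only [add_apply, map_add, Pi.add_apply]; abel)
    (fun _ _ _ => by ext; simp only [smul_apply, map_smul, Pi.smul_apply]; module)
    (fun _ _ _ => by ext; simp only [add_apply, map_add, Pi.add_apply]; abel)
    (fun _ _ _ => by ext; simp only [smul_apply, map_smul, Pi.smul_apply]; module)

theorem torsionPairing_apply (Q : E →L[ℝ] E →L[ℝ] E) (A : E →L[ℝ] E) (u v : E) :
    torsionPairing Q A u v = Q (A u) v - Q (A v) u + A (Q v u) - A (Q u v) := rfl

theorem torsionPairing_smulRight (d : E →L[ℝ] ℝ) (A B : E →L[ℝ] E) (u v : E) :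
    torsionPairing (d.smulRight A) B u v
      = (d v • (B * A) u - d u • (B * A) v) - (d (B v) • A u - d (B u) • A v) := by
  simp only [torsionPairing_apply, ContinuousLinearMap.smulRight_apply, smul_apply, map_smul,
    mul_apply_eq_comp]
  abel

theorem sum_sum_smul_eq_zero_of_antisymm {ι M : Type*} [AddCommGroup M] [Module ℝ M]
    (s : Finset ι) (γ : ι → ℝ) (f : ι → ι → M) (hf : ∀ i j, f i j = -f j i) :
    ∑ i ∈ s, ∑ j ∈ s, (γ i * γ j) • f i j = 0 := by
  have h : ∑ i ∈ s, ∑ j ∈ s, (γ i * γ j) • f i j = -∑ i ∈ s, ∑ j ∈ s, (γ i * γ j) • f i j := by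
    conv_lhs => rw [sum_comm]
    rw [← sum_neg_distrib]
    refine sum_congr rfl fun i _ => ?_
    rw [← sum_neg_distrib]
    exact sum_congr rfl fun j _ => by rw [hf j i, mul_comm, smul_neg]
  linear_combination (norm := module) (1 / 2 : ℝ) • h

noncomputable def powFDeriv (n : E →L[ℝ] E) (P : E →L[ℝ] E →L[ℝ] E) (i : ℕ) :
    E →L[ℝ] E →L[ℝ] E :=
  ∑ r ∈ range i, n ^ (i.pred - r) •> P <• n ^ r

section PowFDeriv

variable (n : E →L[ℝ] E) (P : E →L[ℝ] E →L[ℝ] E)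

theorem powFDeriv_apply (i : ℕ) (w z : E) :
    powFDeriv n P i w z = ∑ r ∈ range i, (n ^ (i - 1 - r)) (P w ((n ^ r) z)) := by
  simp [powFDeriv, Nat.pred_eq_sub_one]

theorem pow_apply_comm_s16 (i j : ℕ) (w : E) : (n ^ i) ((n ^ j) w) = (n ^ j) ((n ^ i) w) := by
  rw [← mul_apply_eq_comp, ← mul_apply_eq_comp, pow_mul_comm]

theorem apply_pow_sub_pow_apply_s16 (j : ℕ) (u w : E) :
    P ((n ^ j) u) w - (n ^ j) (P u w)
      = ∑ b ∈ range j, (n ^ (j - 1 - b)) (P (n ((n ^ b) u)) w - n (P ((n ^ b) u) w)) := by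
  have h := sum_range_sub (fun c => (n ^ (j - c)) (P ((n ^ c) u) w)) j
  simp only [Nat.sub_self, Nat.sub_zero, pow_zero, one_apply_eq_self] at h
  rw [← h]
  refine sum_congr rfl fun b hb => ?_
  have hjb : j - b = j - 1 - b + 1 := by have := mem_range.mp hb; omega
  rw [hjb, show j - (b + 1) = j - 1 - b by omega, pow_succ n (j - 1 - b), pow_succ' n b,
    mul_apply_eq_comp, mul_apply_eq_comp, map_sub]

theorem powFDeriv_pow_apply_sub (i j : ℕ) (u v : E) :
    powFDeriv n P i ((n ^ j) u) v - (n ^ j) (powFDeriv n P i u v)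
      = ∑ a ∈ range i, ∑ b ∈ range j, (n ^ (i - 1 - a)) ((n ^ (j - 1 - b))
          (P (n ((n ^ b) u)) ((n ^ a) v) - n (P ((n ^ b) u) ((n ^ a) v)))) := by
  rw [powFDeriv_apply, powFDeriv_apply, map_sum, ← sum_sub_distrib]
  refine sum_congr rfl fun a _ => ?_
  rw [pow_apply_comm_s16 n j, ← map_sub, apply_pow_sub_pow_apply_s16, map_sum]

theorem powFDeriv_pow_apply_sub_comm
    (hZ : ∀ u v, P (n u) v - n (P u v) = P (n v) u - n (P v u)) (i j : ℕ) (u v : E) :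
    powFDeriv n P i ((n ^ j) u) v - (n ^ j) (powFDeriv n P i u v)
      = powFDeriv n P j ((n ^ i) v) u - (n ^ i) (powFDeriv n P j v u) := by
  rw [powFDeriv_pow_apply_sub, powFDeriv_pow_apply_sub, sum_comm]
  refine sum_congr rfl fun b _ => sum_congr rfl fun a _ => ?_
  rw [hZ, pow_apply_comm_s16]

theorem torsionPairing_powFDeriv_pow (hnP : torsionPairing P n = 0) (i j : ℕ) :
    torsionPairing (powFDeriv n P i) (n ^ j) = -torsionPairing (powFDeriv n P j) (n ^ i) := by
  have hZ : ∀ u v, P (n u) v - n (P u v) = P (n v) u - n (P v u) := fun u v => by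
    have h := congrFun (congrFun hnP u) v
    rw [torsionPairing_apply, Pi.zero_apply, Pi.zero_apply] at h
    linear_combination (norm := module) h
  ext u v
  have h₁ := powFDeriv_pow_apply_sub_comm n P hZ i j u v
  have h₂ := powFDeriv_pow_apply_sub_comm n P hZ i j v u
  simp only [Pi.neg_apply, torsionPairing_apply]
  linear_combination (norm := module) h₁ - h₂

theorem torsionPairing_sum_smul_pow (hnP : torsionPairing P n = 0) (s : Finset ℕ) (γ : ℕ → ℝ)
    (d : ℕ → E →L[ℝ] ℝ) (u v : E) :
    torsionPairing (∑ i ∈ s, (γ i • powFDeriv n P i + (d i).smulRight (n ^ i)))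
        (∑ j ∈ s, γ j • n ^ j) u v
      = ∑ j ∈ s, ∑ i ∈ s, γ j • ((d i v • (n ^ (j + i)) u - d i u • (n ^ (j + i)) v)
          - (d i ((n ^ j) v) • (n ^ i) u - d i ((n ^ j) u) • (n ^ i) v)) := by
  have hexp : torsionPairing (∑ i ∈ s, (γ i • powFDeriv n P i + (d i).smulRight (n ^ i)))
        (∑ j ∈ s, γ j • n ^ j)
      = ∑ j ∈ s, ∑ i ∈ s, (γ j * γ i) • torsionPairing (powFDeriv n P i) (n ^ j)
        + ∑ j ∈ s, ∑ i ∈ s, γ j • torsionPairing ((d i).smulRight (n ^ i)) (n ^ j) := by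
    simp only [map_sum, map_add, map_smul, LinearMap.sum_apply, LinearMap.add_apply,
      LinearMap.smul_apply, smul_add, smul_sum, smul_smul, sum_add_distrib]
  rw [hexp, sum_sum_smul_eq_zero_of_antisymm s γ _
    (fun j i => torsionPairing_powFDeriv_pow n P hnP i j), zero_add]
  simp only [Finset.sum_apply, Pi.smul_apply, torsionPairing_smulRight, ← pow_add]

end PowFDeriv

theorem tor_apply_eq_torsionPairing {M : E → E →L[ℝ] E} {X Y : E → E} {x : E}
    (hM : DifferentiableAt ℝ M x) (hX : DifferentiableAt ℝ X x) (hY : DifferentiableAt ℝ Y x) :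
    tor M X Y x = torsionPairing (fderiv ℝ M x) (M x) (X x) (Y x) := by
  unfold tor lie app
  rw [fderiv_clm_apply hM hX, fderiv_clm_apply hM hY]
  simp only [add_apply, ContinuousLinearMap.comp_apply,
    ContinuousLinearMap.flip_apply, map_sub, map_add, torsionPairing_apply]
  abel

theorem torsionPairing_fderiv_eq_zero {N : E → E →L[ℝ] E} (hN : Differentiable ℝ N)
    (hT : ∀ X Y : E → E, ContDiff ℝ (⊤ : ℕ∞) X → ContDiff ℝ (⊤ : ℕ∞) Y → ∀ x, tor N X Y x = 0)
    (x : E) : torsionPairing (fderiv ℝ N x) (N x) = 0 := by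
  ext u v
  have h := hT (fun _ => u) (fun _ => v) contDiff_const contDiff_const x
  rwa [tor_apply_eq_torsionPairing (hN x) (differentiableAt_const u)
    (differentiableAt_const v)] at h

theorem hasFDerivAt_sum_smul_pow {N : E → E →L[ℝ] E} {c : ℕ → E → ℝ} {s : Finset ℕ} {x : E}
    (hN : DifferentiableAt ℝ N x) (hc : ∀ i ∈ s, DifferentiableAt ℝ (c i) x) :
    HasFDerivAt (fun p => ∑ i ∈ s, c i p • N p ^ i)
      (∑ i ∈ s, (c i x • powFDeriv (N x) (fderiv ℝ N x) i
        + (fderiv ℝ (c i) x).smulRight (N x ^ i))) x :=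
  HasFDerivAt.fun_sum fun i hi => (hc i hi).hasFDerivAt.smul (hN.hasFDerivAt.fun_pow' i)

theorem exists_sum_smul_pow_eq_sum_range {ι : Type*} (N : E → E →L[ℝ] E) (s : Finset ι)
    (e : ι → ℕ) (ψ : ι → E → E →L[ℝ] ℝ) (hψ : ∀ t ∈ s, ContDiff ℝ (⊤ : ℕ∞) (ψ t)) :
    ∃ (m : ℕ) (φ : ℕ → E → E →L[ℝ] ℝ), (∀ r ≤ m, ContDiff ℝ (⊤ : ℕ∞) (φ r)) ∧
      ∀ x u v, ∑ t ∈ s, (ψ t x v • (N x ^ e t) u - ψ t x u • (N x ^ e t) v)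
        = ∑ r ∈ range (m + 1), (φ r x v • (N x ^ r) u - φ r x u • (N x ^ r) v) := by
  classical
  refine ⟨s.sup e, fun r x => ∑ t ∈ s with e t = r, ψ t x,
    fun r _ => ContDiff.sum fun t ht => hψ t (mem_filter.mp ht).1, fun x u v => ?_⟩
  rw [← sum_fiberwise_of_maps_to (g := e) (t := range (s.sup e + 1))
    fun t ht => mem_range.mpr (Nat.lt_succ_of_le (le_sup ht))]
  refine sum_congr rfl fun r _ => ?_
  rw [_root_.sum_apply, _root_.sum_apply, sum_smul, sum_smul, ← sum_sub_distrib]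
  exact sum_congr rfl fun t ht => by rw [(mem_filter.mp ht).2]

theorem exists_tor_sum_smul_pow_eq {N : E → E →L[ℝ] E} (hN : ContDiff ℝ (⊤ : ℕ∞) N)
    (hT : ∀ x, torsionPairing (fderiv ℝ N x) (N x) = 0) (s : Finset ℕ) (c : ℕ → E → ℝ)
    (hc : ∀ i ∈ s, ContDiff ℝ (⊤ : ℕ∞) (c i)) :
    ∃ (m : ℕ) (φ : ℕ → E → E →L[ℝ] ℝ), (∀ r ≤ m, ContDiff ℝ (⊤ : ℕ∞) (φ r)) ∧
      ∀ (X Y : E → E) (x : E), DifferentiableAt ℝ X x → DifferentiableAt ℝ Y x →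
        tor (fun p => ∑ i ∈ s, c i p • N p ^ i) X Y x
          = ∑ r ∈ range (m + 1),
              (φ r x (Y x) • (N x ^ r) (X x) - φ r x (X x) • (N x ^ r) (Y x)) := by
  have hdc : ∀ i ∈ s, ContDiff ℝ (⊤ : ℕ∞) (fderiv ℝ (c i)) := fun i hi =>
    (hc i hi).fderiv_right (by exact_mod_cast le_top)
  obtain ⟨m, φ, hφ, hsum⟩ := exists_sum_smul_pow_eq_sum_range N ((s ×ˢ s).disjSum (s ×ˢ s))
    (Sum.elim (fun p => p.1 + p.2) (fun p => p.2))
    (Sum.elim (fun p x => c p.1 x • fderiv ℝ (c p.2) x)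
      (fun p x => -c p.1 x • (fderiv ℝ (c p.2) x).comp (N x ^ p.1)))
    (by
      rintro (⟨j, i⟩ | ⟨j, i⟩) ht <;>
        simp only [inl_mem_disjSum, inr_mem_disjSum, mem_product] at ht
      · exact (hc j ht.1).smul (hdc i ht.2)
      · exact (hc j ht.1).neg.smul ((hdc i ht.2).clm_comp (hN.pow j)))
  refine ⟨m, φ, hφ, fun X Y x hX hY => ?_⟩
  have hM := hasFDerivAt_sum_smul_pow (hN.differentiable (by simp) x)
    fun i hi => (hc i hi).differentiable (by simp) x
  rw [tor_apply_eq_torsionPairing hM.differentiableAt hX hY, hM.fderiv,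
    torsionPairing_sum_smul_pow _ _ (hT x), ← hsum, sum_disjSum, sum_product, sum_product,
    ← sum_add_distrib]
  refine sum_congr rfl fun j _ => ?_
  rw [← sum_add_distrib]
  refine sum_congr rfl fun i _ => ?_
  simp only [Sum.elim_inl, Sum.elim_inr, smul_apply, ContinuousLinearMap.comp_apply, smul_eq_mul]
  module

theorem stmt16_general (N : E → E →L[ℝ] E) (hN : ContDiff ℝ (⊤ : ℕ∞) N)
    (hT : ∀ X Y : E → E, ContDiff ℝ (⊤ : ℕ∞) X → ContDiff ℝ (⊤ : ℕ∞) Y →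
      ∀ x, tor N X Y x = 0)
    (k : ℕ)
    (a : ℕ → E → ℝ) (ha : ∀ i < k, ContDiff ℝ (⊤ : ℕ∞) (a i)) :
    ∃ (m : ℕ) (φ : ℕ → E → E →L[ℝ] ℝ),
      (∀ i ≤ m, ContDiff ℝ (⊤ : ℕ∞) (φ i)) ∧
      ∀ X Y : E → E, ContDiff ℝ (⊤ : ℕ∞) X → ContDiff ℝ (⊤ : ℕ∞) Y → ∀ x,
        tor (fun p => (N p) ^ k - ∑ i ∈ Finset.range k, a (k - 1 - i) p • (N p) ^ i) X Y x
          = ∑ i ∈ Finset.range (m + 1),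
              (φ i x (Y x) • ((N x) ^ i) (X x) - φ i x (X x) • ((N x) ^ i) (Y x)) := by
  set c : ℕ → E → ℝ := fun i p => if i < k then -a (k - 1 - i) p else 1
  have hc : ∀ i ∈ range (k + 1), ContDiff ℝ (⊤ : ℕ∞) (c i) := fun i _ => by
    by_cases hi : i < k
    · simpa only [c, hi, if_true] using (ha _ (by omega)).neg
    · simpa only [c, hi, if_false] using contDiff_const
  have hM : (fun p => N p ^ k - ∑ i ∈ range k, a (k - 1 - i) p • N p ^ i)
      = fun p => ∑ i ∈ range (k + 1), c i p • N p ^ i := by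
    funext p
    rw [sum_range_succ, sub_eq_neg_add, ← sum_neg_distrib]
    simp only [c, lt_irrefl, if_false, one_smul]
    congr 1
    exact sum_congr rfl fun i hi => by rw [if_pos (mem_range.mp hi), neg_smul]
  obtain ⟨m, φ, hφ, htor⟩ := exists_tor_sum_smul_pow_eq hN
    (torsionPairing_fderiv_eq_zero (hN.differentiable (by simp)) hT) _ c hc
  refine ⟨m, φ, hφ, fun X Y hX hY x => ?_⟩
  rw [hM]
  exact htor X Y x (hX.differentiable (by simp) x) (hY.differentiable (by simp) x)

theorem stmt16 (N : E → E →L[ℝ] E) (hN : ContDiff ℝ (⊤ : ℕ∞) N)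
    (hT : ∀ X Y : E → E, ContDiff ℝ (⊤ : ℕ∞) X → ContDiff ℝ (⊤ : ℕ∞) Y →
      ∀ x, tor N X Y x = 0)
    (k : ℕ) (hk : 1 ≤ k)
    (a : ℕ → E → ℝ) (ha : ∀ i < k, ContDiff ℝ (⊤ : ℕ∞) (a i)) :
    ∃ (m : ℕ) (φ : ℕ → E → E →L[ℝ] ℝ),
      (∀ i ≤ m, ContDiff ℝ (⊤ : ℕ∞) (φ i)) ∧
      ∀ X Y : E → E, ContDiff ℝ (⊤ : ℕ∞) X → ContDiff ℝ (⊤ : ℕ∞) Y → ∀ x,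
        tor (fun p => (N p) ^ k - ∑ i ∈ Finset.range k, a (k - 1 - i) p • (N p) ^ i) X Y x
          = ∑ i ∈ Finset.range (m + 1),
              (φ i x (Y x) • ((N x) ^ i) (X x) - φ i x (X x) • ((N x) ^ i) (Y x)) :=
  stmt16_general N hN hT k a ha
end
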